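/- arXiv:1605.05031 — 2 statements merged into one kernel-verified Lean document; each statement's English description precedes it below -/
import Mathlib

section
/- Fix q₀ ∈ ℝ and q ∈ H¹(0,1) with q(0)=q(1)=0. Suppose f ∈ H¹(0,1) with f(0)=f(1)=0 satisfies f' + 2(q₀+q)f − C = 0 on (0,1), where C = ∫₀¹ 2(q₀+q)f dx. Then f ≡ 0. (Hence the linearized Riccati map has trivial kernel on W¹₀.) -/
/-!
Multiplying by the integrating factor `E = exp (∫ₐ p)` turns `f' = C - p f` into
`(E f)' = C E`. Integrating from `a` and using `f a = 0` gives `E f = C ∫ₐ E`; at `b` the left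
side vanishes while `∫ₐᵇ E > 0`, so `C = 0`, and then `E f ≡ 0` with `E > 0`.
-/

open Real Set intervalIntegral

section IntegratingFactor

variable {p f : ℝ → ℝ} {a b C : ℝ}

lemma continuous_exp_integral (hp : Continuous p) (a : ℝ) :
    Continuous fun x => exp (∫ t in a..x, p t) :=
  continuous_exp.comp (continuous_primitive (fun _ _ => hp.intervalIntegrable _ _) a)

lemma hasDerivAt_exp_integral_mul (hp : Continuous p) {x f' : ℝ} (hf : HasDerivAt f f' x) :
    HasDerivAt (fun y => exp (∫ t in a..y, p t) * f y)
      (exp (∫ t in a..x, p t) * (f' + p x * f x)) x := by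
  have hP := (hp.integral_hasStrictDerivAt a x).hasDerivAt
  exact (hP.exp.fun_mul hf).congr_deriv (by ring)

lemma exp_integral_mul_eq (hp : Continuous p)
    (hode : ∀ x ∈ Icc a b, HasDerivAt f (C - p x * f x) x) {x : ℝ} (hx : x ∈ Icc a b) :
    exp (∫ t in a..x, p t) * f x = f a + C * ∫ t in a..x, exp (∫ s in a..t, p s) := by
  have hderiv : ∀ t ∈ uIcc a x, HasDerivAt (fun y => exp (∫ s in a..y, p s) * f y)
      (C * exp (∫ s in a..t, p s)) t := by
    intro t ht
    rw [uIcc_of_le hx.1] at ht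
    convert hasDerivAt_exp_integral_mul hp (hode t ⟨ht.1, ht.2.trans hx.2⟩) using 1
    ring
  have hFTC := integral_eq_sub_of_hasDerivAt hderiv
    ((continuous_const.mul (continuous_exp_integral hp a)).intervalIntegrable _ _)
  rw [integral_const_mul, integral_same, exp_zero, one_mul] at hFTC
  linarith

theorem eq_zero_on_Icc_of_hasDerivAt_eq_const_sub_mul (hp : Continuous p)
    (hode : ∀ x ∈ Icc a b, HasDerivAt f (C - p x * f x) x) (ha : f a = 0) (hb : f b = 0) :
    ∀ x ∈ Icc a b, f x = 0 := by
  intro x hx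
  rcases hx.1.eq_or_lt with rfl | hax
  · exact ha
  have hC : C = 0 := by
    have hpos : 0 < ∫ t in a..b, exp (∫ s in a..t, p s) :=
      intervalIntegral_pos_of_pos_on
        ((continuous_exp_integral hp a).intervalIntegrable _ _)
        (fun _ _ => exp_pos _) (hax.trans_le hx.2)
    have hEb := exp_integral_mul_eq hp hode (right_mem_Icc.2 (hax.le.trans hx.2))
    rw [ha, hb, mul_zero, zero_add] at hEb
    exact (mul_eq_zero.1 hEb.symm).resolve_right hpos.ne'
  have hEx := exp_integral_mul_eq hp hode hx
  rw [ha, hC, zero_mul, add_zero] at hEx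
  exact (mul_eq_zero.1 hEx).resolve_left (exp_ne_zero _)

end IntegratingFactor

theorem stmt5_general (q₀ : ℝ) (q : ℝ → ℝ) (hq : ContDiff ℝ 1 q)
    (f : ℝ → ℝ) (hf : ContDiff ℝ 1 f) (hf0 : f 0 = 0) (hf1 : f 1 = 0)
    (C : ℝ)
    (hode : ∀ x ∈ Set.Icc (0:ℝ) 1, deriv f x + 2 * (q₀ + q x) * f x - C = 0) :
    ∀ x ∈ Set.Icc (0:ℝ) 1, f x = 0 := by
  refine eq_zero_on_Icc_of_hasDerivAt_eq_const_sub_mul (p := fun x => 2 * (q₀ + q x)) (C := C)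
    (continuous_const.mul (continuous_const.add hq.continuous)) ?_ hf0 hf1
  intro x hx
  have hderiv : deriv f x = C - 2 * (q₀ + q x) * f x := by linarith [hode x hx]
  exact hderiv ▸ (hf.differentiable one_ne_zero x).hasDerivAt

/-- Triviality of the kernel of the linearized Riccati map on `W¹₀`:
if `f(0)=f(1)=0` and `f' + 2(q₀+q)f − C = 0` on `[0,1]` with `C = ∫₀¹ 2(q₀+q)f`,
then `f ≡ 0` on `[0,1]`. -/
theorem stmt5 (q₀ : ℝ) (q : ℝ → ℝ) (hq : ContDiff ℝ 1 q)
    (hq0 : q 0 = 0) (hq1 : q 1 = 0)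
    (f : ℝ → ℝ) (hf : ContDiff ℝ 1 f) (hf0 : f 0 = 0) (hf1 : f 1 = 0)
    (C : ℝ) (hC : C = ∫ x in (0:ℝ)..1, 2 * (q₀ + q x) * f x)
    (hode : ∀ x ∈ Set.Icc (0:ℝ) 1, deriv f x + 2 * (q₀ + q x) * f x - C = 0) :
    ∀ x ∈ Set.Icc (0:ℝ) 1, f x = 0 :=
  stmt5_general q₀ q hq f hf hf0 hf1 C hode
end

section
/- For fixed q₀ ∈ ℝ and q ∈ W¹₀, the linear operator L : W¹₀ → H₀, Lf = f' + 2(q₀+q)f − ∫₀¹ 2(q₀+q)f dx, is a bijective bounded linear operator (it is injective, and Fredholm of index zero since it is a compact perturbation of f ↦ f', hence invertible). -/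
/-! With `μ = exp ∫₀ˣ a` an integrating factor, the nonlocal problem
`f' + a f - ∫₀¹ a f = p`, `f(0) = f(1) = 0` becomes `(μ f)' = μ (p + c)` with the unknown
constant `c = ∫₀¹ a f`. Every solution vanishing at `0` is therefore
`f = μ⁻¹ ∫₀ˣ μ (p + c)`, and `f(1) = 0` pins down `c` because `∫₀¹ μ > 0`. Conversely, for
that `c`, integrating `a f = p + c - f'` over `[0,1]` gives back `∫₀¹ a f = c` since `p` has mean
zero. -/

open intervalIntegral Real Set

noncomputable section

def integratingFactor (a : ℝ → ℝ) (x : ℝ) : ℝ := exp (∫ t in (0:ℝ)..x, a t)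

def integratingFactorSolution (a r : ℝ → ℝ) (x : ℝ) : ℝ :=
  (integratingFactor a x)⁻¹ * ∫ t in (0:ℝ)..x, integratingFactor a t * r t

variable {a r : ℝ → ℝ}

lemma integratingFactor_pos (a : ℝ → ℝ) (x : ℝ) : 0 < integratingFactor a x := exp_pos _

lemma hasDerivAt_integratingFactor (ha : Continuous a) (x : ℝ) :
    HasDerivAt (integratingFactor a) (integratingFactor a x * a x) x :=
  (ha.integral_hasStrictDerivAt 0 x).hasDerivAt.exp

lemma continuous_integratingFactor (ha : Continuous a) : Continuous (integratingFactor a) :=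
  continuous_iff_continuousAt.2 fun x => (hasDerivAt_integratingFactor ha x).continuousAt

lemma hasDerivAt_integral_integratingFactor_mul (ha : Continuous a) (hr : Continuous r)
    (x : ℝ) :
    HasDerivAt (fun y => ∫ t in (0:ℝ)..y, integratingFactor a t * r t)
      (integratingFactor a x * r x) x :=
  (((continuous_integratingFactor ha).mul hr).integral_hasStrictDerivAt 0 x).hasDerivAt

lemma integratingFactor_mul_eq_integral (ha : Continuous a) (hr : Continuous r) {h : ℝ → ℝ}
    {b : ℝ} (hh : ∀ x ∈ Icc 0 b, HasDerivAt h (r x - a x * h x) x) (h0 : h 0 = 0) :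
    ∀ x ∈ Icc 0 b, integratingFactor a x * h x = ∫ t in (0:ℝ)..x, integratingFactor a t * r t := by
  have hμh : ∀ x ∈ Icc 0 b, HasDerivAt (fun y => integratingFactor a y * h y)
      (integratingFactor a x * r x) x := fun x hx => by
    refine ((hasDerivAt_integratingFactor ha x).mul (hh x hx)).congr_deriv ?_
    ring
  refine eq_of_has_deriv_right_eq
    (fun x hx => (hμh x (Ico_subset_Icc_self hx)).hasDerivWithinAt)
    (fun x _ => (hasDerivAt_integral_integratingFactor_mul ha hr x).hasDerivWithinAt)
    (HasDerivAt.continuousOn hμh)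
    (HasDerivAt.continuousOn fun x _ => hasDerivAt_integral_integratingFactor_mul ha hr x)
    (by simp [h0])

lemma hasDerivAt_integratingFactorSolution (ha : Continuous a) (hr : Continuous r) (x : ℝ) :
    HasDerivAt (integratingFactorSolution a r)
      (r x - a x * integratingFactorSolution a r x) x := by
  have hμ := (integratingFactor_pos a x).ne'
  refine (((hasDerivAt_integratingFactor ha x).inv hμ).mul
    (hasDerivAt_integral_integratingFactor_mul ha hr x)).congr_deriv ?_
  simp only [integratingFactorSolution, Pi.inv_apply]
  field_simp
  ring

lemma integratingFactorSolution_zero (a r : ℝ → ℝ) : integratingFactorSolution a r 0 = 0 := by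
  simp [integratingFactorSolution]

lemma contDiff_integratingFactorSolution (ha : Continuous a) (hr : Continuous r) :
    ContDiff ℝ 1 (integratingFactorSolution a r) := by
  have hd := hasDerivAt_integratingFactorSolution ha hr
  have hdiff : Differentiable ℝ (integratingFactorSolution a r) :=
    fun x => (hd x).differentiableAt
  refine contDiff_one_iff_deriv.2 ⟨hdiff, ?_⟩
  rw [funext fun x => (hd x).deriv]
  exact hr.sub (ha.mul hdiff.continuous)

lemma integral_integratingFactor_mul_add_const (ha : Continuous a) (hr : Continuous r)
    (c x : ℝ) :
    ∫ t in (0:ℝ)..x, integratingFactor a t * (r t + c)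
      = (∫ t in (0:ℝ)..x, integratingFactor a t * r t)
        + c * ∫ t in (0:ℝ)..x, integratingFactor a t := by
  have hμ := continuous_integratingFactor ha
  simp only [mul_add]
  rw [integral_add (f := fun t => integratingFactor a t * r t)
    (g := fun t => integratingFactor a t * c) ((hμ.mul hr).intervalIntegrable 0 x)
    ((hμ.mul continuous_const).intervalIntegrable 0 x), integral_mul_const, mul_comm c]

lemma integral_integratingFactor_pos (ha : Continuous a) {b : ℝ} (hb : 0 < b) :
    0 < ∫ t in (0:ℝ)..b, integratingFactor a t :=
  intervalIntegral_pos_of_pos_on ((continuous_integratingFactor ha).intervalIntegrable 0 b)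
    (fun x _ => integratingFactor_pos a x) hb

lemma exists_const_solution_vanishing_at_endpoints (ha : Continuous a) {p : ℝ → ℝ}
    (hp : Continuous p) {b : ℝ} (hb : 0 < b) :
    ∃ c f, ContDiff ℝ 1 f ∧ f 0 = 0 ∧ f b = 0 ∧ ∀ x, HasDerivAt f (p x + c - a x * f x) x := by
  set I := ∫ t in (0:ℝ)..b, integratingFactor a t
  set c := -(∫ t in (0:ℝ)..b, integratingFactor a t * p t) / I
  have hr : Continuous fun x => p x + c := hp.add continuous_const
  refine ⟨c, integratingFactorSolution a (fun x => p x + c),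
    contDiff_integratingFactorSolution ha hr, integratingFactorSolution_zero _ _, ?_,
    hasDerivAt_integratingFactorSolution ha hr⟩
  have hcI : c * I = -∫ t in (0:ℝ)..b, integratingFactor a t * p t :=
    div_mul_cancel₀ _ (integral_integratingFactor_pos ha hb).ne'
  rw [integratingFactorSolution, integral_integratingFactor_mul_add_const ha hp, hcI,
    add_neg_cancel, mul_zero]

lemma eq_of_hasDerivAt_add_const (ha : Continuous a) {p f g : ℝ → ℝ} (hp : Continuous p)
    {b c d : ℝ} (hb : 0 < b) (hf : ∀ x ∈ Icc 0 b, HasDerivAt f (p x + c - a x * f x) x)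
    (hg : ∀ x ∈ Icc 0 b, HasDerivAt g (p x + d - a x * g x) x)
    (hf0 : f 0 = 0) (hfb : f b = 0) (hg0 : g 0 = 0) (hgb : g b = 0) :
    c = d ∧ ∀ x ∈ Icc 0 b, f x = g x := by
  have hrep : ∀ {e : ℝ} {k : ℝ → ℝ}, (∀ x ∈ Icc 0 b, HasDerivAt k (p x + e - a x * k x) x) →
      k 0 = 0 → ∀ x ∈ Icc 0 b, integratingFactor a x * k x
        = (∫ t in (0:ℝ)..x, integratingFactor a t * p t)
          + e * ∫ t in (0:ℝ)..x, integratingFactor a t := fun hk hk0 x hx => by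
    rw [← integral_integratingFactor_mul_add_const ha hp]
    exact integratingFactor_mul_eq_integral ha (hp.add continuous_const) hk hk0 x hx
  have hcd : c = d := by
    have hfb' := hrep hf hf0 b (right_mem_Icc.2 hb.le)
    have hgb' := hrep hg hg0 b (right_mem_Icc.2 hb.le)
    rw [hfb, mul_zero] at hfb'
    rw [hgb, mul_zero] at hgb'
    exact mul_right_cancel₀ (integral_integratingFactor_pos ha hb).ne' (by linarith)
  subst hcd
  refine ⟨rfl, fun x hx => mul_left_cancel₀ (integratingFactor_pos a x).ne' ?_⟩
  rw [hrep hf hf0 x hx, hrep hg hg0 x hx]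

lemma integral_mul_eq_of_hasDerivAt (ha : Continuous a) {p f : ℝ → ℝ} (hp : Continuous p)
    (hpmean : ∫ x in (0:ℝ)..1, p x = 0) {c : ℝ}
    (hf : ∀ x ∈ Icc (0:ℝ) 1, HasDerivAt f (p x + c - a x * f x) x)
    (hf0 : f 0 = 0) (hf1 : f 1 = 0) :
    ∫ x in (0:ℝ)..1, a x * f x = c := by
  have hf' : ∀ x ∈ uIcc (0:ℝ) 1, HasDerivAt f (p x + c - a x * f x) x := by
    rwa [uIcc_of_le zero_le_one]
  have hpc : IntervalIntegrable (fun x => p x + c) MeasureTheory.volume 0 1 :=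
    (hp.add continuous_const).intervalIntegrable 0 1
  have haf : IntervalIntegrable (fun x => a x * f x) MeasureTheory.volume 0 1 :=
    (ha.continuousOn.mul (HasDerivAt.continuousOn hf')).intervalIntegrable
  have hftc := integral_eq_sub_of_hasDerivAt hf' (hpc.sub haf)
  rw [hf1, hf0, sub_zero, integral_sub hpc haf,
    integral_add (hp.intervalIntegrable 0 1) intervalIntegrable_const, hpmean,
    integral_const] at hftc
  simp only [sub_zero, smul_eq_mul, one_mul, zero_add] at hftc
  linarith

end

theorem stmt15_general (q₀ : ℝ) (q : ℝ → ℝ) (hq : Continuous q)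
    (p : ℝ → ℝ) (hp : Continuous p) (hpmean : (∫ x in (0:ℝ)..1, p x) = 0) :
    ∃ f : ℝ → ℝ, ContDiff ℝ 1 f ∧ f 0 = 0 ∧ f 1 = 0 ∧
      (∀ x ∈ Set.Icc (0:ℝ) 1,
        deriv f x + 2 * (q₀ + q x) * f x
          - (∫ s in (0:ℝ)..1, 2 * (q₀ + q s) * f s) = p x) ∧
      ∀ g : ℝ → ℝ, ContDiff ℝ 1 g → g 0 = 0 → g 1 = 0 →
        (∀ x ∈ Set.Icc (0:ℝ) 1,
          deriv g x + 2 * (q₀ + q x) * g x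
            - (∫ s in (0:ℝ)..1, 2 * (q₀ + q s) * g s) = p x) →
        ∀ x ∈ Set.Icc (0:ℝ) 1, g x = f x := by
  have ha : Continuous fun x => 2 * (q₀ + q x) := continuous_const.mul (continuous_const.add hq)
  obtain ⟨c, f, hfC1, hf0, hf1, hf'⟩ := exists_const_solution_vanishing_at_endpoints ha hp one_pos
  have hmean := integral_mul_eq_of_hasDerivAt ha hp hpmean (fun x _ => hf' x) hf0 hf1
  refine ⟨f, hfC1, hf0, hf1, fun x _ => by rw [hmean, (hf' x).deriv]; ring, ?_⟩
  intro g hg hg0 hg1 hgeq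
  have hg' : ∀ x ∈ Icc (0:ℝ) 1, HasDerivAt g
      (p x + (∫ s in (0:ℝ)..1, 2 * (q₀ + q s) * g s) - 2 * (q₀ + q x) * g x) x :=
    fun x hx => ((hg.differentiable one_ne_zero x).hasDerivAt).congr_deriv (by linarith [hgeq x hx])
  exact (eq_of_hasDerivAt_add_const ha hp one_pos hg' (fun x _ => hf' x) hg0 hg1 hf0 hf1).2

/-- Invertibility of the linearized Riccati operator
`L f = f' + 2(q₀+q)f − ∫₀¹ 2(q₀+q)f` from `W¹₀` onto mean-zero functions:
for every mean-zero `p` there is a solution `f` with `f(0)=f(1)=0`, unique on `[0,1]`. -/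
theorem stmt15 (q₀ : ℝ) (q : ℝ → ℝ) (hq : Continuous q) (hq0 : q 0 = 0) (hq1 : q 1 = 0)
    (p : ℝ → ℝ) (hp : Continuous p) (hpmean : (∫ x in (0:ℝ)..1, p x) = 0) :
    ∃ f : ℝ → ℝ, ContDiff ℝ 1 f ∧ f 0 = 0 ∧ f 1 = 0 ∧
      (∀ x ∈ Set.Icc (0:ℝ) 1,
        deriv f x + 2 * (q₀ + q x) * f x
          - (∫ s in (0:ℝ)..1, 2 * (q₀ + q s) * f s) = p x) ∧
      ∀ g : ℝ → ℝ, ContDiff ℝ 1 g → g 0 = 0 → g 1 = 0 →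
        (∀ x ∈ Set.Icc (0:ℝ) 1,
          deriv g x + 2 * (q₀ + q x) * g x
            - (∫ s in (0:ℝ)..1, 2 * (q₀ + q s) * g s) = p x) →
        ∀ x ∈ Set.Icc (0:ℝ) 1, g x = f x :=
  stmt15_general q₀ q hq p hp hpmean
end
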